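/- Let β be an algebraic unit of degree n ≥ 5 over ℚ with conjugates β_1, …, β_n such that Gal(ℚ(β_1,…,β_n)/ℚ) = 𝔄_n. Let a_1, …, a_n ∈ ℤ and set α = β_1^{a_1} ⋯ β_n^{a_n}; assume α generates ℚ(β_1,…,β_n) over ℚ. Let x = (x_1,…,x_n) with x_i = log|β_i| and y = (y_1,…,y_n) with y_j = a_j − (1/n)∑_{i=1}^n a_i. Then x, y ∈ H_n, log M(β) = (n/2)·|x|_1, and log M(α) = (n·n!/4)·s_n(x,y). -/

import Mathlib

/-!
An algebraic unit has conjugates that are again units, and the constant coefficient of its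
minimal polynomial is `±1`; so `∏ |βᵢ| = 1`, i.e. `∑ xᵢ = 0`. Its integer minimal polynomial is
monic, and `log max(1, t) = (log t + |log t|) / 2`, so `log M(β) = ½ ∑ |xᵢ|`. The same holds for
`α`, a product of units. Because `α` generates the splitting field, an automorphism is determined
by its value at `α`, and every conjugate of `α` is `σ α` for an automorphism `σ` of `ℂ` (extend an
automorphism of the normal field `ℚ(α)`). Hence the conjugates of `α` are the `∏ β_{τ i} ^ aᵢ`,
`τ ∈ 𝔄ₙ`, each exactly once, and `log |∏ β_{τ i} ^ aᵢ| = ∑ x_{τ j} yⱼ` because `∑ x = 0`.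
-/

open Polynomial

/-- The primitive integer minimal polynomial of an algebraic number `γ`. -/
noncomputable def intMinPoly (γ : ℂ) : Polynomial ℤ :=
  (IsLocalization.integerNormalization (nonZeroDivisors ℤ) (minpoly ℚ γ)).primPart

/-- The Mahler measure `M(γ) = |a| ∏ max(1,|γᵢ|)`. -/
noncomputable def mahlerM (γ : ℂ) : ℝ :=
  ((intMinPoly γ).leadingCoeff.natAbs : ℝ) *
    (((minpoly ℚ γ).aroots ℂ).map (fun z => max 1 ‖z‖)).prod

/-- The image of the permutation representation of the Galois group of the splitting
field on the roots `B 0, …, B (n-1)`. -/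
def galoisImage (n : ℕ) (B : Fin n → ℂ) : Set (Equiv.Perm (Fin n)) :=
  {τ | ∃ σ : ℂ ≃ₐ[ℚ] ℂ, ∀ i, σ (B i) = B (τ i)}

/-- `sₙ(x,y) = (2/n!) ∑_{σ ∈ 𝔄ₙ} |(1/n) ∑ⱼ x_{σ(j)} yⱼ|`. -/
noncomputable def snBil (n : ℕ) (x y : Fin n → ℝ) : ℝ :=
  (2 / (n.factorial : ℝ)) *
    ∑ σ : alternatingGroup (Fin n), |(1 / (n : ℝ)) * ∑ j, x ((σ : Equiv.Perm (Fin n)) j) * y j|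

open IntermediateField

section Units

theorem aeval_reverse_eq_zero_iff {R K : Type*} [CommRing R] [Field K] [Algebra R K] {x : K}
    (hx : x ≠ 0) (p : R[X]) : aeval x p.reverse = 0 ↔ aeval x⁻¹ p = 0 := by
  have : Invertible x⁻¹ := invertibleOfNonzero (inv_ne_zero hx)
  simpa [aeval_def, invOf_eq_inv] using eval₂_reverse_eq_zero_iff (algebraMap R K) x⁻¹ p

variable {K : Type*} [Field K]

theorem ne_zero_of_aeval_minpoly_eq_zero {F : Type*} [Field F] [Algebra F K] {γ r : K}
    (hγ : IsIntegral F γ) (h0 : γ ≠ 0) (hr : aeval r (minpoly F γ) = 0) : r ≠ 0 := by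
  rintro rfl
  rw [← coeff_zero_eq_aeval_zero', map_eq_zero] at hr
  exact minpoly.coeff_zero_ne_zero hγ h0 hr

/- Since `0⁻¹ = 0` in Lean, `γ ≠ 0` has to be required separately. -/
def IsAlgebraicUnit (γ : K) : Prop :=
  γ ≠ 0 ∧ IsIntegral ℤ γ ∧ IsIntegral ℤ γ⁻¹

namespace IsAlgebraicUnit

theorem inv {γ : K} (hγ : IsAlgebraicUnit γ) : IsAlgebraicUnit γ⁻¹ :=
  ⟨inv_ne_zero hγ.1, hγ.2.2, by simpa using hγ.2.1⟩

theorem pow {γ : K} (hγ : IsAlgebraicUnit γ) (k : ℕ) : IsAlgebraicUnit (γ ^ k) :=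
  ⟨pow_ne_zero k hγ.1, hγ.2.1.pow k, by simpa using hγ.2.2.pow k⟩

theorem zpow {γ : K} (hγ : IsAlgebraicUnit γ) (m : ℤ) : IsAlgebraicUnit (γ ^ m) := by
  obtain ⟨k, rfl | rfl⟩ := m.eq_nat_or_neg
  · simpa using hγ.pow k
  · simpa using (hγ.pow k).inv

theorem prod {ι : Type*} {s : Finset ι} {z : ι → K} (hz : ∀ i ∈ s, IsAlgebraicUnit (z i)) :
    IsAlgebraicUnit (∏ i ∈ s, z i) :=
  ⟨Finset.prod_ne_zero_iff.2 fun i hi => (hz i hi).1, IsIntegral.prod _ fun i hi => (hz i hi).2.1,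
    by simpa using IsIntegral.prod _ fun i hi => (hz i hi).2.2⟩

end IsAlgebraicUnit

variable [CharZero K]

theorem minpoly_rat_eq_map_int {γ : K} (hγ : IsIntegral ℤ γ) :
    minpoly ℚ γ = (minpoly ℤ γ).map (algebraMap ℤ ℚ) :=
  minpoly.isIntegrallyClosed_eq_field_fractions' ℚ hγ

theorem isIntegral_of_aeval_minpoly_eq_zero {γ r : K} (hγ : IsIntegral ℤ γ)
    (hr : aeval r (minpoly ℚ γ) = 0) : IsIntegral ℤ r :=
  ⟨minpoly ℤ γ, minpoly.monic hγ, by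
    rwa [minpoly_rat_eq_map_int hγ, aeval_map_algebraMap, aeval_def] at hr⟩

theorem IsAlgebraicUnit.isUnit_minpoly_coeff_zero {γ : K} (hγ : IsAlgebraicUnit γ) :
    IsUnit ((minpoly ℤ γ).coeff 0) := by
  obtain ⟨k, hk⟩ := minpoly.isIntegrallyClosed_dvd hγ.2.1
    ((aeval_reverse_eq_zero_iff hγ.1 _).2 (minpoly.aeval ℤ γ⁻¹))
  have hc0 := congrArg (coeff · 0) hk
  simp only [coeff_zero_reverse, (minpoly.monic hγ.2.2).leadingCoeff, mul_coeff_zero] at hc0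
  exact .of_mul_eq_one _ hc0.symm

/- `r⁻¹` is a root of the minimal polynomial of `γ⁻¹`, because `minpoly ℚ γ` divides the reversal
of `minpoly ℚ γ⁻¹`. -/
theorem IsAlgebraicUnit.of_aeval_minpoly_eq_zero {γ r : K} (hγ : IsAlgebraicUnit γ)
    (hr : aeval r (minpoly ℚ γ) = 0) : IsAlgebraicUnit r := by
  have hr0 : r ≠ 0 := ne_zero_of_aeval_minpoly_eq_zero hγ.2.1.tower_top hγ.1 hr
  obtain ⟨k, hk⟩ := minpoly.dvd ℚ γ ((aeval_reverse_eq_zero_iff hγ.1 _).2 (minpoly.aeval ℚ γ⁻¹))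
  have hrrev : aeval r (minpoly ℚ γ⁻¹).reverse = 0 := by rw [hk, map_mul, hr, zero_mul]
  exact ⟨hr0, isIntegral_of_aeval_minpoly_eq_zero hγ.2.1 hr,
    isIntegral_of_aeval_minpoly_eq_zero hγ.2.2 ((aeval_reverse_eq_zero_iff hr0 _).1 hrrev)⟩

end Units

section MahlerMeasure

theorem natAbs_leadingCoeff_intMinPoly {γ : ℂ} (hγ : IsIntegral ℤ γ) :
    (intMinPoly γ).leadingCoeff.natAbs = 1 := by
  obtain ⟨c, hc0, hc⟩ := IsLocalization.integerNormalization_spec (nonZeroDivisors ℤ)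
    (minpoly ℚ γ)
  have hN : IsLocalization.integerNormalization (nonZeroDivisors ℤ) (minpoly ℚ γ)
      = C c * minpoly ℤ γ := by
    apply map_injective (algebraMap ℤ ℚ) (RingHom.injective_int _)
    rw [hc, Polynomial.map_mul, map_C, ← minpoly_rat_eq_map_int hγ, Algebra.smul_def]
    rfl
  have hN0 : C c * minpoly ℤ γ ≠ 0 :=
    mul_ne_zero (C_ne_zero.2 (nonZeroDivisors.ne_zero hc0)) (minpoly.ne_zero hγ)
  obtain ⟨u, hu, hCu⟩ := Polynomial.isUnit_iff.1 (isUnit_primPart_C c)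
  rw [intMinPoly, hN, primPart_mul hN0, (minpoly.monic hγ).isPrimitive.primPart_eq, ← hCu,
    leadingCoeff_mul, leadingCoeff_C, (minpoly.monic hγ).leadingCoeff, mul_one]
  exact Int.isUnit_iff_natAbs_eq.1 hu

theorem mahlerM_eq_prod_of_isIntegral {γ : ℂ} (hγ : IsIntegral ℤ γ) :
    mahlerM γ = (((minpoly ℚ γ).aroots ℂ).map (fun z => max 1 ‖z‖)).prod := by
  rw [mahlerM, natAbs_leadingCoeff_intMinPoly hγ, Nat.cast_one, one_mul]

theorem IsAlgebraicUnit.norm_prod_aroots_minpoly {γ : ℂ} (hγ : IsAlgebraicUnit γ) :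
    ‖((minpoly ℚ γ).aroots ℂ).prod‖ = 1 := by
  have hmonic : ((minpoly ℚ γ).map (algebraMap ℚ ℂ)).Monic :=
    (minpoly.monic hγ.2.1.tower_top).map _
  have h := (IsAlgClosed.splits _).coeff_zero_eq_prod_roots_of_monic hmonic
  have hc0 : ((minpoly ℚ γ).map (algebraMap ℚ ℂ)).coeff 0 = ((minpoly ℤ γ).coeff 0 : ℂ) := by
    simp [minpoly_rat_eq_map_int hγ.2.1]
  rw [hc0] at h
  have := congrArg norm h
  rw [norm_mul, norm_pow, norm_neg, norm_one, one_pow, one_mul, Complex.norm_intCast,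
    ← Int.cast_abs, Int.isUnit_iff_abs_eq.1 hγ.isUnit_minpoly_coeff_zero] at this
  exact_mod_cast this.symm

theorem IsAlgebraicUnit.sum_log_norm_eq_zero {γ : ℂ} (hγ : IsAlgebraicUnit γ) {ι : Type*}
    [Fintype ι] {f : ι → ℂ}
    (hroots : (minpoly ℚ γ).aroots ℂ = Multiset.map f Finset.univ.val) :
    ∑ i, Real.log ‖f i‖ = 0 := by
  have hprod : ∏ i, ‖f i‖ = 1 := by
    rw [← hγ.norm_prod_aroots_minpoly, hroots, ← norm_prod]
    rfl
  have hne : ∀ i ∈ Finset.univ, ‖f i‖ ≠ 0 := Finset.prod_ne_zero_iff.1 (hprod ▸ one_ne_zero)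
  rw [← Real.log_prod hne, hprod, Real.log_one]

theorem IsAlgebraicUnit.log_mahlerM {γ : ℂ} (hγ : IsAlgebraicUnit γ) {ι : Type*} [Fintype ι]
    {f : ι → ℂ}
    (hroots : (minpoly ℚ γ).aroots ℂ = Multiset.map f Finset.univ.val) :
    Real.log (mahlerM γ) = 2⁻¹ * ∑ i, |Real.log ‖f i‖| := by
  rw [mahlerM_eq_prod_of_isIntegral hγ.2.1, hroots, Multiset.map_map, Finset.prod_map_val]
  simp only [Function.comp_apply]
  rw [Real.log_prod fun i _ => (one_pos.trans_le (le_max_left _ _)).ne']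
  simp_rw [← Real.posLog_eq_log_max_one (norm_nonneg _),
    ← Real.half_mul_log_add_log_abs, ← Finset.mul_sum, Finset.sum_add_distrib,
    hγ.sum_log_norm_eq_zero hroots, zero_add]

end MahlerMeasure

section Galois

variable {F Ω : Type*} [Field F] [Field Ω] [Algebra F Ω]

/- Act by `g` on the coefficients of `L[s]` for a transcendence basis `s` of `Ω / L`, then extend
to `Ω`, an algebraic closure of `L(s)`. -/
theorem IntermediateField.exists_algEquiv_extension [IsAlgClosed Ω] (L : IntermediateField F Ω)
    (g : L ≃ₐ[F] L) : ∃ σ : Ω ≃ₐ[F] Ω, ∀ z : L, σ z = g z := by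
  obtain ⟨s, hs⟩ := exists_isTranscendenceBasis L Ω
  have := IsAlgClosed.isAlgClosure_of_transcendence_basis _ hs
  let A := Algebra.adjoin L (Set.range ((↑) : s → Ω))
  let e : A ≃ₐ[L] MvPolynomial s L := hs.1.aevalEquiv.symm
  let f : A ≃+* A :=
    e.toRingEquiv.trans ((MvPolynomial.mapEquiv s g.toRingEquiv).trans e.symm.toRingEquiv)
  have hf : ∀ z : L, f (algebraMap L A z) = algebraMap L A (g z) := fun z => by
    simp only [f, RingEquiv.trans_apply, AlgEquiv.coe_ringEquiv,
      e.commutes, MvPolynomial.mapEquiv_apply, MvPolynomial.algebraMap_eq, MvPolynomial.map_C]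
    exact e.symm.commutes (g z)
  let σ : Ω ≃+* Ω := IsAlgClosure.equivOfEquiv Ω Ω f
  have hσ : ∀ z : L, σ z = g z := fun z => by
    simpa [hf] using IsAlgClosure.equivOfEquiv_algebraMap (L := Ω) (M := Ω) f (algebraMap L A z)
  refine ⟨AlgEquiv.ofRingEquiv (f := σ) fun c => ?_, hσ⟩
  simpa using hσ (algebraMap F L c)

theorem exists_algEquiv_apply_eq_of_mem_aroots [IsAlgClosed Ω] {α r : Ω} (hα : IsIntegral F α)
    (hnormal : Normal F F⟮α⟯) (hr : r ∈ (minpoly F α).aroots Ω) : ∃ σ : Ω ≃ₐ[F] Ω, σ α = r := by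
  let φ : F⟮α⟯ →ₐ[F] Ω := (algHomAdjoinIntegralEquiv F hα).symm ⟨r, hr⟩
  obtain ⟨σ, hσ⟩ := exists_algEquiv_extension _ (φ.restrictNormal' F⟮α⟯)
  refine ⟨σ, ?_⟩
  have := hσ (AdjoinSimple.gen F α)
  rw [AdjoinSimple.coe_gen] at this
  exact this.trans ((φ.restrictNormal_commutes F⟮α⟯ _).trans
    (algHomAdjoinIntegralEquiv_symm_apply_gen F hα _))

theorem AlgEquiv.apply_mem_aroots {p : F[X]} (σ : Ω ≃ₐ[F] Ω) {z : Ω} (hz : z ∈ p.aroots Ω) :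
    σ z ∈ p.aroots Ω := by
  obtain ⟨hp, hz⟩ := mem_aroots.1 hz
  exact mem_aroots.2 ⟨hp, by rw [← σ.coe_toAlgHom, aeval_algHom_apply, hz, map_zero]⟩

theorem rootSet_eq_range_of_aroots_eq {p : F[X]} {ι : Type*} [Fintype ι] {B : ι → Ω}
    (hroots : p.aroots Ω = Multiset.map B Finset.univ.val) : p.rootSet Ω = Set.range B := by
  classical
  ext z
  simp [rootSet_def, hroots]

theorem normal_adjoin_range_of_aroots_eq [IsAlgClosed Ω] {p : F[X]} {ι : Type*} [Fintype ι]
    {B : ι → Ω} (hroots : p.aroots Ω = Multiset.map B Finset.univ.val) :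
    Normal F (adjoin F (Set.range B)) := by
  rw [← rootSet_eq_range_of_aroots_eq hroots]
  exact Normal.of_isSplittingField (hFEp := adjoin_rootSet_isSplittingField (IsAlgClosed.splits _))
    p

theorem exists_perm_apply_eq_of_aroots_eq {p : F[X]} {ι : Type*} [Fintype ι] {B : ι → Ω}
    (hroots : p.aroots Ω = Multiset.map B Finset.univ.val) (hB : Function.Injective B)
    (σ : Ω ≃ₐ[F] Ω) : ∃ τ : Equiv.Perm ι, ∀ i, σ (B i) = B (τ i) := by
  have hmem : ∀ i, ∃ j, B j = σ (B i) := fun i => by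
    have := σ.apply_mem_aroots (hroots ▸ Multiset.mem_map_of_mem B (Finset.mem_univ_val i))
    rw [hroots] at this
    simpa using this
  choose τ hτ using hmem
  have hτinj : Function.Injective τ := fun i j hij =>
    hB (σ.injective (by rw [← hτ i, ← hτ j, hij]))
  exact ⟨Equiv.ofBijective τ (Finite.injective_iff_bijective.1 hτinj), fun i => (hτ i).symm⟩

theorem injective_of_aroots_minpoly_eq [CharZero F] {γ : Ω} (hγ : IsIntegral F γ) {ι : Type*}
    [Fintype ι] {B : ι → Ω} (hroots : (minpoly F γ).aroots Ω = Multiset.map B Finset.univ.val) :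
    Function.Injective B := by
  have : ((minpoly F γ).aroots Ω).Nodup := nodup_roots (minpoly.irreducible hγ).separable.map
  rw [hroots] at this
  exact fun i j h =>
    Multiset.inj_on_of_nodup_map this i (Finset.mem_univ_val i) j (Finset.mem_univ_val j) h

theorem AlgEquiv.apply_eq_of_mem_adjoin_simple {σ σ' : Ω ≃ₐ[F] Ω} {α z : Ω} (h : σ α = σ' α)
    (hz : z ∈ F⟮α⟯) : σ z = σ' z := by
  have := adjoin_algHom_ext F (φ₁ := (σ : Ω →ₐ[F] Ω).comp F⟮α⟯.val)
    (φ₂ := (σ' : Ω →ₐ[F] Ω).comp F⟮α⟯.val) (by rintro x rfl; exact h)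
  exact DFunLike.congr_fun this ⟨z, hz⟩

end Galois

theorem aroots_minpoly_eq_map_galoisImage {n : ℕ} {B : Fin n → ℂ} {p : ℚ[X]}
    (hroots : p.aroots ℂ = Multiset.map B Finset.univ.val) (hB : Function.Injective B)
    (H : Subgroup (Equiv.Perm (Fin n))) [Fintype H] (hgal : galoisImage n B = H)
    (a : Fin n → ℤ) {α : ℂ} (hα : α = ∏ i, B i ^ a i) (hαint : IsIntegral ℚ α)
    (hgen : ℚ⟮α⟯ = adjoin ℚ (Set.range B)) :
    (minpoly ℚ α).aroots ℂ =
      Multiset.map (fun τ : H => ∏ i, B ((τ : Equiv.Perm (Fin n)) i) ^ a i) Finset.univ.val := by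
  set conj := fun τ : H => ∏ i, B ((τ : Equiv.Perm (Fin n)) i) ^ a i
  have hσα : ∀ (σ : ℂ ≃ₐ[ℚ] ℂ) (τ : H), (∀ i, σ (B i) = B ((τ : Equiv.Perm (Fin n)) i)) →
      σ α = conj τ := fun σ τ hτ => by
    simp only [hα, map_prod, map_zpow₀, hτ, conj]
  have hH : ∀ τ, τ ∈ H ↔ ∃ σ : ℂ ≃ₐ[ℚ] ℂ, ∀ i, σ (B i) = B (τ i) := fun τ => by
    rw [← SetLike.mem_coe, ← hgal]
    rfl
  have hconj : ∀ σ : ℂ ≃ₐ[ℚ] ℂ, ∃ τ : H, σ α = conj τ := fun σ => by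
    obtain ⟨τ, hτ⟩ := exists_perm_apply_eq_of_aroots_eq hroots hB σ
    exact ⟨⟨τ, (hH τ).2 ⟨σ, hτ⟩⟩, hσα σ _ hτ⟩
  have hinj : Function.Injective conj := fun τ τ' h => by
    obtain ⟨σ, hσ⟩ := (hH τ).1 τ.2
    obtain ⟨σ', hσ'⟩ := (hH τ').1 τ'.2
    have hBα : ∀ i, B i ∈ ℚ⟮α⟯ := fun i => hgen ▸ subset_adjoin ℚ _ ⟨i, rfl⟩
    have heq : σ α = σ' α := by rw [hσα σ τ hσ, hσα σ' τ' hσ', h]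
    ext i
    exact congrArg _ (hB (by rw [← hσ, ← hσ', AlgEquiv.apply_eq_of_mem_adjoin_simple heq (hBα i)]))
  refine (Multiset.Nodup.ext (nodup_roots (minpoly.irreducible hαint).separable.map)
    ((Finset.univ.nodup).map hinj)).2 fun r => ⟨fun hr => ?_, fun hr => ?_⟩
  · obtain ⟨σ, rfl⟩ := exists_algEquiv_apply_eq_of_mem_aroots hαint
      (by rw [hgen]; exact normal_adjoin_range_of_aroots_eq hroots) hr
    obtain ⟨τ, hτ⟩ := hconj σ
    exact hτ ▸ Multiset.mem_map_of_mem conj (Finset.mem_univ_val τ)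
  · obtain ⟨τ, -, rfl⟩ := Multiset.mem_map.1 hr
    obtain ⟨σ, hσ⟩ := (hH τ).1 τ.2
    rw [← hσα σ τ hσ]
    exact σ.apply_mem_aroots (mem_aroots.2 ⟨minpoly.ne_zero hαint, minpoly.aeval ℚ α⟩)

theorem Real.log_norm_prod_zpow {ι 𝕜 : Type*} [NormedField 𝕜] (s : Finset ι) {z : ι → 𝕜}
    (hz : ∀ i ∈ s, z i ≠ 0) (m : ι → ℤ) :
    Real.log ‖∏ i ∈ s, z i ^ m i‖ = ∑ i ∈ s, m i * Real.log ‖z i‖ := by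
  simp_rw [norm_prod, norm_zpow]
  rw [Real.log_prod fun i hi => zpow_ne_zero _ (norm_ne_zero_iff.2 (hz i hi))]
  simp_rw [Real.log_zpow]

theorem Fintype.sum_comp_perm_mul_sub_const {ι : Type*} [Fintype ι] {x : ι → ℝ}
    (hx : ∑ i, x i = 0) (τ : Equiv.Perm ι) (m : ι → ℝ) (c : ℝ) :
    ∑ j, x (τ j) * (m j - c) = ∑ j, x (τ j) * m j := by
  simp [mul_sub, Finset.sum_sub_distrib, ← Finset.sum_mul, Equiv.sum_comp τ x, hx]

/-- Let `β` be an algebraic unit of degree `n ≥ 5` with conjugates `Bᵢ`,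
Galois group `𝔄ₙ`, and `α = ∏ Bᵢ^{aᵢ}` a generator of the splitting field.  With
`xᵢ = log|Bᵢ|` and `yⱼ = aⱼ - (1/n)∑ aᵢ` one has `x, y ∈ Hₙ`,
`log M(β) = (n/2)|x|₁`, and `log M(α) = (n·n!/4)·sₙ(x,y)`. -/
theorem stmt_8 (n : ℕ) (hn : 5 ≤ n) (b : ℂ) (B : Fin n → ℂ)
    (hbint : IsIntegral ℤ b) (hbunit : IsIntegral ℤ b⁻¹)
    (hdeg : (minpoly ℚ b).natDegree = n)
    (hroots : (minpoly ℚ b).aroots ℂ = Multiset.map B Finset.univ.val)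
    (hgal : galoisImage n B = (alternatingGroup (Fin n) : Set (Equiv.Perm (Fin n))))
    (a : Fin n → ℤ) (α : ℂ) (hα : α = ∏ i, B i ^ a i)
    (hgen : IntermediateField.adjoin ℚ {α} = IntermediateField.adjoin ℚ (Set.range B))
    (x y : Fin n → ℝ)
    (hx : ∀ i, x i = Real.log ‖B i‖)
    (hy : ∀ j, y j = (a j : ℝ) - (1 / (n : ℝ)) * ∑ i, (a i : ℝ)) :
    (∑ j, x j = 0) ∧ (∑ j, y j = 0) ∧
    Real.log (mahlerM b) = ((n : ℝ) / 2) * ((1 / (n : ℝ)) * ∑ j, |x j|) ∧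
    Real.log (mahlerM α) = ((n : ℝ) * (n.factorial : ℝ) / 4) * snBil n x y := by
  have hn0 : (n : ℝ) ≠ 0 := Nat.cast_ne_zero.2 (by omega)
  have hb : IsAlgebraicUnit b := by
    refine ⟨?_, hbint, hbunit⟩
    rintro rfl
    rw [minpoly.zero, natDegree_X] at hdeg
    omega
  have hB : ∀ i, IsAlgebraicUnit (B i) := fun i => hb.of_aeval_minpoly_eq_zero
    (mem_aroots.1 (hroots ▸ Multiset.mem_map_of_mem B (Finset.mem_univ_val i))).2
  have hαunit : IsAlgebraicUnit α := hα ▸ IsAlgebraicUnit.prod fun i _ => (hB i).zpow (a i)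
  have hxsum : ∑ j, x j = 0 := by simpa [hx] using hb.sum_log_norm_eq_zero hroots
  have hlog : ∀ τ : Equiv.Perm (Fin n), Real.log ‖∏ i, B (τ i) ^ a i‖ = ∑ j, x (τ j) * y j := by
    intro τ
    rw [Real.log_norm_prod_zpow _ fun i _ => (hB _).1]
    simp_rw [hy, Fintype.sum_comp_perm_mul_sub_const hxsum, hx, mul_comm]
  have hconj := aroots_minpoly_eq_map_galoisImage hroots
    (injective_of_aroots_minpoly_eq hbint.tower_top hroots) _ hgal a hα hαunit.2.1.tower_top hgen
  refine ⟨hxsum, ?_, ?_, ?_⟩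
  · simp [hy, Finset.sum_sub_distrib, hn0]
  · rw [hb.log_mahlerM hroots]
    simp_rw [hx]
    field_simp
  · rw [hαunit.log_mahlerM hconj, snBil]
    simp_rw [hlog, abs_mul, abs_one_div, Nat.abs_cast, ← Finset.mul_sum]
    field_simp
    ring
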